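/- For any submodular complexity measure μ_s on Boolean functions of n variables, and any f, μ_s(f) ≤ μ_s(f ∧ x_i) + μ_s(f ∧ ¬x_i) + μ_s(x_i ∧ ¬x_i) does not follow in general, but the following does: μ_s(f ∧ x_i) + μ_s(f ∧ ¬x_i) ≤ μ_s(f) + 2 − μ_s(1), where 1 is the constant-one function. -/
import Mathlib


/-- for any submodular complexity measure `μ_s` (`μ_s ≥ 0`,
`μ_s(x_i) = μ_s(¬x_i) = 1`, `μ_s(f ∨ g) + μ_s(f ∧ g) ≤ μ_s(f) + μ_s(g)` pointwise)
and any `f` and `i`, `μ_s(f ∧ x_i) + μ_s(f ∧ ¬x_i) ≤ μ_s(f) + 2 - μ_s(1)`,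
where `1` is the constant-one function. -/
theorem stmt14 (n : ℕ) (μ : ((Fin n → Bool) → Bool) → ℝ)
    (hnonneg : ∀ f, 0 ≤ μ f)
    (hproj : ∀ i : Fin n, μ (fun y => y i) = 1 ∧ μ (fun y => !y i) = 1)
    (hsub : ∀ f g, μ (fun y => f y || g y) + μ (fun y => f y && g y) ≤ μ f + μ g) :
    ∀ (f : (Fin n → Bool) → Bool) (i : Fin n),
      μ (fun y => f y && y i) + μ (fun y => f y && !y i) ≤
        μ f + 2 - μ (fun _ => true) := by
  intro f i
  have h1 := hsub f (fun y => y i)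
  have h2 := hsub (fun y => f y || y i) (fun y => !y i)
  have e1 : (fun y => (f y || y i) && !y i) = (fun y => f y && !y i) := by
    funext y; cases f y <;> cases y i <;> rfl
  have e2 : (fun y => (f y || y i) || !y i) = (fun _ => true) := by
    funext y; cases f y <;> cases y i <;> rfl
  rw [e1, e2] at h2
  obtain ⟨p1, p2⟩ := hproj i
  linarith
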